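/- Let W be a d×d matrix A₂ weight on ℝ, let σ = {σ_I}_{I∈𝒟} be a sequence of d×d complex matrices, and let T_σ f = ∑_{I∈𝒟} σ_I f̂(I) h_I. Suppose there is a constant C₀ such that ‖T_σ f‖_{L²(W)} ≤ C₀ ‖f‖_{L²(W)} for all f ∈ L²(W) ∩ L²(ℝ, ℂ^d). Then for every I ∈ 𝒟 and every e ∈ ℂ^d, ⟨⟨W⟩_I^{-1/2} σ_I^* ⟨W⟩_I σ_I ⟨W⟩_I^{-1/2} e, e⟩_{ℂ^d} ≤ C₀² ‖e‖²_{ℂ^d}; equivalently, ‖⟨W⟩_I^{1/2} σ_I ⟨W⟩_I^{-1/2}‖ ≤ C₀ for every I ∈ 𝒟. -/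

import Mathlib

open MeasureTheory Matrix Filter
open scoped ENNReal ComplexOrder

noncomputable section

abbrev Vec (d : ℕ) := Fin d → ℂ
abbrev Mat (d : ℕ) := Matrix (Fin d) (Fin d) ℂ

/-- The standard dyadic interval `[2^{-k} n, 2^{-k}(n+1))`. -/
def dyadI (k n : ℤ) : Set ℝ := Set.Ico ((2:ℝ) ^ (-k) * n) ((2:ℝ) ^ (-k) * (n + 1))

/-- The Haar function of the dyadic interval indexed by `(k, n)`. -/
def haar (k n : ℤ) (x : ℝ) : ℝ :=
  Real.sqrt ((2:ℝ) ^ k) *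
    ((dyadI (k+1) (2*n+1)).indicator (fun _ => (1:ℝ)) x -
      (dyadI (k+1) (2*n)).indicator (fun _ => (1:ℝ)) x)

/-- The non-cancellative Haar function `h_I^1 = 1_I / |I|`. -/
def hone (k n : ℤ) (x : ℝ) : ℝ := (dyadI k n).indicator (fun _ => (2:ℝ) ^ k) x

/-- Haar coefficient `f̂(I) = ∫ f · h_I`. -/
def fhat {d : ℕ} (f : ℝ → Vec d) (k n : ℤ) : Vec d :=
  ∫ x in dyadI k n, ((haar k n x : ℝ) : ℂ) • f x

/-- Average of a vector-valued function over a dyadic interval. -/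
def vavg {d : ℕ} (g : ℝ → Vec d) (k n : ℤ) : Vec d :=
  (2:ℝ) ^ k • ∫ x in dyadI k n, g x

/-- Average `⟨W⟩_I` of a matrix-valued function over a dyadic interval. -/
def avgD {d : ℕ} (W : ℝ → Mat d) (k n : ℤ) : Mat d :=
  Matrix.of fun i j => (2:ℝ) ^ k • ∫ x in dyadI k n, W x i j

/-- Average `⟨W⟩_{[a,b)}` of a matrix-valued function over an interval. -/
def avgI {d : ℕ} (W : ℝ → Mat d) (a b : ℝ) : Mat d :=
  Matrix.of fun i j => (b - a)⁻¹ • ∫ x in Set.Ico a b, W x i j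

/-- Inner product on `ℂ^d`, linear in the first entry. -/
def ip {d : ℕ} (u v : Vec d) : ℂ := ∑ i, u i * (starRingEnd ℂ) (v i)

/-- Squared Euclidean norm on `ℂ^d`. -/
def vnSq {d : ℕ} (u : Vec d) : ℝ := ∑ i, ‖u i‖ ^ 2

/-- Quadratic form `⟨A u, u⟩`. -/
def qf {d : ℕ} (A : Mat d) (u : Vec d) : ℝ := (ip (A.mulVec u) u).re

/-- Operator norm of a matrix acting on `ℂ^d`. -/
def mOpNorm {d : ℕ} (A : Mat d) : ℝ := ‖Matrix.toEuclideanCLM (𝕜 := ℂ) A‖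

/-- The positive semidefinite square root (junk value `0` if not psd). -/
def msqrt {d : ℕ} (A : Mat d) : Mat d :=
  @dite _ A.PosSemidef (Classical.dec _) (fun h => (h.1.eigenvectorUnitary : Mat d) *
    diagonal ((↑) ∘ (h.1.eigenvalues · |>.sqrt)) * (star h.1.eigenvectorUnitary : Mat d)) (fun _ => 0)

/-- `‖f‖²_{L²(W)}`, valued in `[0,∞]`. -/
def wNormSq {d : ℕ} (W : ℝ → Mat d) (f : ℝ → Vec d) : ℝ≥0∞ :=
  ∫⁻ x, ENNReal.ofReal (qf (W x) (f x))

/-- `‖f‖²_{L²(ℝ,ℂ^d)}`, valued in `[0,∞]`. -/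
def l2NormSq {d : ℕ} (f : ℝ → Vec d) : ℝ≥0∞ :=
  ∫⁻ x, ENNReal.ofReal (vnSq (f x))

/-- The weighted square function sum `∑_{I ∈ 𝒟} ⟨⟨W⟩_I f̂(I), f̂(I)⟩`. -/
def sqSum {d : ℕ} (W : ℝ → Mat d) (f : ℝ → Vec d) : ℝ≥0∞ :=
  ∑' p : ℤ × ℤ, ENNReal.ofReal (qf (avgD W p.1 p.2) (fhat f p.1 p.2))

/-- `W` is a matrix weight: locally integrable entries, a.e. positive semidefinite values. -/
def IsMatrixWeight {d : ℕ} (W : ℝ → Mat d) : Prop :=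
  (∀ i j, LocallyIntegrable (fun x => W x i j) volume) ∧
  (∀ᵐ x ∂volume, (W x).PosSemidef)

/-- `K` bounds the `A₂` characteristic `sup_I ‖⟨W⟩_I^{1/2} ⟨W^{-1}⟩_I^{1/2}‖²` of `W`. -/
def A2Bound {d : ℕ} (W : ℝ → Mat d) (K : ℝ) : Prop :=
  ∀ a b : ℝ, a < b →
    mOpNorm (msqrt (avgI W a b) * msqrt (avgI (fun x => (W x)⁻¹) a b)) ^ 2 ≤ K

/-- `W` is a matrix `A₂` weight with `A₂` characteristic at most `K` (and `1 ≤ K`,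
as the characteristic is always at least `1`).  The positive definiteness of the
averages of `W` and `W⁻¹` is recorded as well. -/
def IsA2Weight {d : ℕ} (W : ℝ → Mat d) (K : ℝ) : Prop :=
  IsMatrixWeight W ∧ (∀ᵐ x ∂volume, IsUnit (W x).det) ∧
  IsMatrixWeight (fun x => (W x)⁻¹) ∧ 1 ≤ K ∧ A2Bound W K ∧
  (∀ a b : ℝ, a < b → (avgI W a b).PosDef) ∧
  (∀ a b : ℝ, a < b → (avgI (fun x => (W x)⁻¹) a b).PosDef) ∧
  (∀ k n : ℤ, (avgD W k n).PosDef) ∧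
  (∀ k n : ℤ, (avgD (fun x => (W x)⁻¹) k n).PosDef)


/-!
Test the multiplier on `f = h_I v`. By orthonormality of the Haar system, `f̂(J) = δ_{IJ} v`, so
`T_σ f = h_I σ_I v`; and since `h_I² = 1_I / |I|`, the weighted norm of `h_I v` is
`⟨⟨W⟩_I v, v⟩`. Boundedness therefore gives `⟨⟨W⟩_I σ_I v, σ_I v⟩ ≤ C₀² ⟨⟨W⟩_I v, v⟩`, and
substituting `v = ⟨W⟩_I^{-1/2} e` turns this into both conclusions.
-/
lemma mem_dyadI_iff {k n : ℤ} {x : ℝ} : x ∈ dyadI k n ↔ ⌊(2:ℝ) ^ k * x⌋ = n := by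
  have h := zpow_pos (two_pos : (0:ℝ) < 2) k
  rw [dyadI, Set.mem_Ico, Int.floor_eq_iff, _root_.zpow_neg, inv_mul_le_iff₀ h, lt_inv_mul_iff₀ h]

lemma floor_two_zpow_add_mul_div (k : ℤ) (j : ℕ) (x : ℝ) :
    ⌊(2:ℝ) ^ (k + j) * x⌋ / 2 ^ j = ⌊(2:ℝ) ^ k * x⌋ := by
  have h : (2:ℝ) ^ k * x = (2:ℝ) ^ (k + j) * x / ((2 ^ j : ℕ) : ℝ) := by
    rw [zpow_add₀ two_ne_zero, zpow_natCast]; push_cast; field_simp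
  rw [h, Int.floor_div_natCast]; push_cast; rfl

lemma dyadI_subset_dyadI_div (k n : ℤ) (j : ℕ) : dyadI (k + j) n ⊆ dyadI k (n / 2 ^ j) := by
  intro x hx
  rw [mem_dyadI_iff] at hx ⊢
  rw [← floor_two_zpow_add_mul_div k j, hx]

lemma dyadI_disjoint {k n n' : ℤ} (h : n ≠ n') : Disjoint (dyadI k n) (dyadI k n') :=
  Set.disjoint_left.2 fun _ hx hx' => h ((mem_dyadI_iff.1 hx).symm.trans (mem_dyadI_iff.1 hx'))

lemma measurableSet_dyadI (k n : ℤ) : MeasurableSet (dyadI k n) := measurableSet_Ico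

lemma volume_dyadI (k n : ℤ) : volume (dyadI k n) = ENNReal.ofReal ((2:ℝ) ^ (-k)) := by
  rw [dyadI, Real.volume_Ico]
  ring_nf

lemma haar_of_floor_eq {k n m : ℤ} {x : ℝ} (hx : ⌊(2:ℝ) ^ (k + 1) * x⌋ = m) :
    haar k n x =
      √((2:ℝ) ^ k) * ((if m = 2 * n + 1 then 1 else 0) - (if m = 2 * n then 1 else 0)) := by
  classical
  simp only [haar, Set.indicator_apply, mem_dyadI_iff, hx]

lemma exists_haar_eq_on_dyadI_succ (k n m : ℤ) : ∃ c, ∀ x ∈ dyadI (k + 1) m, haar k n x = c :=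
  ⟨_, fun _ hx => haar_of_floor_eq (mem_dyadI_iff.1 hx)⟩

lemma haar_eq_zero_of_notMem {k n : ℤ} {x : ℝ} (hx : x ∉ dyadI k n) : haar k n x = 0 := by
  have hm := floor_two_zpow_add_mul_div k 1 x
  rw [mem_dyadI_iff, ← hm, Nat.cast_one] at hx
  rw [haar_of_floor_eq rfl, if_neg (by omega), if_neg (by omega), sub_zero, mul_zero]

lemma haar_sq (k n : ℤ) (x : ℝ) : haar k n x ^ 2 = hone k n x := by
  have hm := floor_two_zpow_add_mul_div k 1 x
  rw [Nat.cast_one] at hm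
  classical
  rw [haar_of_floor_eq rfl, hone, Set.indicator_apply, mem_dyadI_iff, ← hm]
  have hs := Real.sq_sqrt (zpow_pos (two_pos : (0:ℝ) < 2) k).le
  split_ifs <;> first | omega | simp [hs]

lemma measurable_haar (k n : ℤ) : Measurable (haar k n) :=
  ((measurable_const.indicator (measurableSet_dyadI _ _)).sub
    (measurable_const.indicator (measurableSet_dyadI _ _))).const_mul _

lemma integrable_indicator_one_dyadI (k n : ℤ) :
    Integrable ((dyadI k n).indicator fun _ => (1:ℝ)) :=
  (integrableOn_const (by simp [volume_dyadI])).integrable_indicator (measurableSet_dyadI k n)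

lemma integral_haar (k n : ℤ) : ∫ x, haar k n x = 0 := by
  simp only [haar]
  rw [integral_const_mul, integral_sub (integrable_indicator_one_dyadI _ _)
    (integrable_indicator_one_dyadI _ _)]
  simp only [integral_indicator_const _ (measurableSet_dyadI _ _), measureReal_def, volume_dyadI,
    sub_self, mul_zero]

lemma integral_hone (k n : ℤ) : ∫ x, hone k n x = 1 := by
  simp only [hone]
  rw [integral_indicator_const _ (measurableSet_dyadI _ _), measureReal_def, volume_dyadI,
    ENNReal.toReal_ofReal (zpow_pos two_pos _).le, smul_eq_mul, ← zpow_add₀ two_ne_zero,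
    neg_add_cancel, zpow_zero]

lemma integral_haar_mul_haar_of_lt {k k' : ℤ} (hk : k < k') (n n' : ℤ) :
    ∫ x, haar k n x * haar k' n' x = 0 := by
  obtain ⟨j, rfl⟩ : ∃ j : ℕ, k' = k + 1 + j := ⟨(k' - (k + 1)).toNat, by omega⟩
  obtain ⟨c, hc⟩ := exists_haar_eq_on_dyadI_succ k n (n' / 2 ^ j)
  have hpt : ∀ x, haar k n x * haar (k + 1 + j) n' x = c * haar (k + 1 + j) n' x := by
    intro x
    by_cases hx : x ∈ dyadI (k + 1 + j) n'
    · rw [hc x (dyadI_subset_dyadI_div _ _ _ hx)]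
    · simp [haar_eq_zero_of_notMem hx]
  simp_rw [hpt, integral_const_mul, integral_haar, mul_zero]

lemma integral_haar_mul_haar (k n k' n' : ℤ) :
    ∫ x, haar k n x * haar k' n' x = if (k, n) = (k', n') then 1 else 0 := by
  split_ifs with h
  · obtain ⟨rfl, rfl⟩ := Prod.mk.inj h
    simp_rw [← sq, haar_sq, integral_hone]
  rcases lt_trichotomy k k' with hlt | rfl | hgt
  · exact integral_haar_mul_haar_of_lt hlt n n'
  · have hn : n ≠ n' := fun hn => h (by rw [hn])
    have hpt : ∀ x, haar k n x * haar k n' x = 0 := by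
      intro x
      by_cases hx : x ∈ dyadI k n
      · rw [haar_eq_zero_of_notMem (Set.disjoint_left.1 (dyadI_disjoint hn) hx), mul_zero]
      · rw [haar_eq_zero_of_notMem hx, zero_mul]
    simp [hpt]
  · simp_rw [mul_comm (haar k n _)]
    exact integral_haar_mul_haar_of_lt hgt n' n

variable {d : ℕ}

lemma fhat_haar_smul (k n k' n' : ℤ) (v : Vec d) :
    fhat (fun x => (haar k n x : ℂ) • v) k' n' = if (k', n') = (k, n) then v else 0 := by
  have hpt : ∀ x, (haar k' n' x : ℂ) • (haar k n x : ℂ) • v =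
      ((haar k' n' x * haar k n x : ℝ) : ℂ) • v := by
    intro x; rw [smul_smul, Complex.ofReal_mul]
  rw [fhat, setIntegral_eq_integral_of_forall_compl_eq_zero
    fun x hx => by rw [haar_eq_zero_of_notMem hx]; simp]
  simp_rw [hpt, integral_smul_const, integral_complex_ofReal, integral_haar_mul_haar]
  split_ifs <;> simp

lemma hasSum_haar_smul_mulVec_fhat_haar_smul (σ : ℤ → ℤ → Mat d) (k n : ℤ) (v : Vec d) (x : ℝ) :
    HasSum (fun p : ℤ × ℤ => (haar p.1 p.2 x : ℂ) •
        (σ p.1 p.2 *ᵥ fhat (fun y => (haar k n y : ℂ) • v) p.1 p.2))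
      ((haar k n x : ℂ) • (σ k n *ᵥ v)) := by
  convert hasSum_ite_eq (k, n) ((haar k n x : ℂ) • (σ k n *ᵥ v)) using 2 with p
  rw [fhat_haar_smul]
  split_ifs with h
  · rw [Prod.mk.eta] at h
    rw [h]
  · rw [mulVec_zero, smul_zero]

lemma measurable_haar_smul (k n : ℤ) (v : Vec d) : Measurable fun x => (haar k n x : ℂ) • v :=
  (Complex.measurable_ofReal.comp (measurable_haar k n)).smul_const v

lemma memLp_haar_smul (k n : ℤ) (v : Vec d) : MemLp (fun x => (haar k n x : ℂ) • v) 2 volume := by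
  rw [memLp_two_iff_integrable_sq_norm (measurable_haar_smul k n v).aestronglyMeasurable]
  have hpt : ∀ x, ‖(haar k n x : ℂ) • v‖ ^ 2 = hone k n x * ‖v‖ ^ 2 := by
    intro x; rw [norm_smul, mul_pow, Complex.norm_real, Real.norm_eq_abs, sq_abs, haar_sq]
  simp_rw [hpt]
  exact ((integrableOn_const (by simp [volume_dyadI])).integrable_indicator
    (measurableSet_dyadI k n)).mul_const _

lemma qf_eq_re_dotProduct (A : Mat d) (u : Vec d) : qf A u = (star u ⬝ᵥ A *ᵥ u).re := by
  simp only [qf, ip, dotProduct, Pi.star_apply, RCLike.star_def, mul_comm]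

lemma vnSq_eq_re_dotProduct (u : Vec d) : vnSq u = (star u ⬝ᵥ u).re := by
  simp only [vnSq, dotProduct, Pi.star_apply, RCLike.star_def, Complex.re_sum, mul_comm,
    Complex.mul_conj, Complex.ofReal_re, Complex.normSq_eq_norm_sq]

lemma qf_conjTranspose_mul_self (B : Mat d) (u : Vec d) : qf (Bᴴ * B) u = vnSq (B *ᵥ u) := by
  rw [qf_eq_re_dotProduct, vnSq_eq_re_dotProduct, ← mulVec_mulVec, dotProduct_mulVec,
    ← star_mulVec]

lemma qf_nonneg {A : Mat d} (hA : A.PosSemidef) (u : Vec d) : 0 ≤ qf A u := by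
  rw [qf_eq_re_dotProduct]
  exact (Complex.nonneg_iff.1 (hA.dotProduct_mulVec_nonneg u)).1

lemma qf_ofReal_smul (A : Mat d) (r : ℝ) (u : Vec d) : qf A ((r : ℂ) • u) = r ^ 2 * qf A u := by
  simp only [qf_eq_re_dotProduct, mulVec_smul, star_smul, smul_dotProduct, dotProduct_smul]
  simp [sq, mul_assoc]

lemma qf_eq_sum (A : Mat d) (u : Vec d) :
    qf A u = ∑ i, ∑ j, (A i j * (star (u i) * u j)).re := by
  simp only [qf_eq_re_dotProduct, dotProduct, mulVec, Finset.mul_sum, Complex.re_sum,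
    Pi.star_apply]
  refine Finset.sum_congr rfl fun i _ => Finset.sum_congr rfl fun j _ => ?_
  ring_nf

lemma qf_avgD {W : ℝ → Mat d} {k n : ℤ}
    (hW : ∀ i j, IntegrableOn (fun x => W x i j) (dyadI k n)) (u : Vec d) :
    qf (avgD W k n) u = (2:ℝ) ^ k * ∫ x in dyadI k n, qf (W x) u := by
  have hint : ∀ i j, Integrable (fun x => (W x i j * (star (u i) * u j)).re)
      (volume.restrict (dyadI k n)) := fun i j => ((hW i j).mul_const _).re
  simp_rw [qf_eq_sum]
  rw [integral_finsetSum _ fun i _ => integrable_finsetSum _ fun j _ => hint i j,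
    Finset.mul_sum]
  refine Finset.sum_congr rfl fun i _ => ?_
  rw [integral_finsetSum _ fun j _ => hint i j, Finset.mul_sum]
  refine Finset.sum_congr rfl fun j _ => ?_
  have hre := integral_re ((hW i j).mul_const (star (u i) * u j))
  simp only [RCLike.re_to_complex] at hre
  rw [hre, integral_mul_const, avgD, Matrix.of_apply, Complex.real_smul, mul_assoc,
    Complex.re_ofReal_mul]

lemma integrableOn_qf {W : ℝ → Mat d} {s : Set ℝ} (hW : ∀ i j, IntegrableOn (fun x => W x i j) s)
    (u : Vec d) : IntegrableOn (fun x => qf (W x) u) s := by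
  simp_rw [qf_eq_sum]
  exact integrable_finsetSum _ fun i _ => integrable_finsetSum _ fun j _ =>
    ((hW i j).mul_const _).re

lemma wNormSq_haar_smul {W : ℝ → Mat d} (hW : IsMatrixWeight W) (k n : ℤ) (u : Vec d) :
    wNormSq W (fun x => (haar k n x : ℂ) • u) = ENNReal.ofReal (qf (avgD W k n) u) := by
  have hint : ∀ i j, IntegrableOn (fun x => W x i j) (dyadI k n) := fun i j =>
    ((hW.1 i j).integrableOn_isCompact isCompact_Icc).mono_set Set.Ico_subset_Icc_self
  have hpt : ∀ x, ENNReal.ofReal (qf (W x) ((haar k n x : ℂ) • u)) =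
      (dyadI k n).indicator (fun x => ENNReal.ofReal ((2:ℝ) ^ k * qf (W x) u)) x := by
    intro x
    rw [qf_ofReal_smul, haar_sq, hone]
    by_cases hx : x ∈ dyadI k n <;> simp [hx]
  have hnonneg : 0 ≤ᵐ[volume.restrict (dyadI k n)] fun x => (2:ℝ) ^ k * qf (W x) u :=
    ae_restrict_of_ae (hW.2.mono fun x hx => mul_nonneg (zpow_pos two_pos k).le (qf_nonneg hx u))
  rw [wNormSq, lintegral_congr fun x => hpt x, lintegral_indicator (measurableSet_dyadI k n),
    ← ofReal_integral_eq_lintegral_ofReal ((integrableOn_qf hint u).const_mul _) hnonneg,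
    integral_const_mul, qf_avgD hint]

lemma le_sq_mul_of_ofReal_rpow_half_le {a b C : ℝ} (ha : 0 ≤ a) (hb : 0 ≤ b) (hC : 0 ≤ C)
    (h : ENNReal.ofReal a ^ ((1:ℝ) / 2) ≤ ENNReal.ofReal C * ENNReal.ofReal b ^ ((1:ℝ) / 2)) :
    a ≤ C ^ 2 * b := by
  rw [ENNReal.ofReal_rpow_of_nonneg ha one_half_pos.le,
    ENNReal.ofReal_rpow_of_nonneg hb one_half_pos.le, ← ENNReal.ofReal_mul hC,
    ENNReal.ofReal_le_ofReal_iff (by positivity), ← Real.sqrt_eq_rpow, ← Real.sqrt_eq_rpow] at h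
  calc a = √a ^ 2 := (Real.sq_sqrt ha).symm
    _ ≤ (C * √b) ^ 2 := pow_le_pow_left₀ (Real.sqrt_nonneg a) h 2
    _ = C ^ 2 * b := by rw [mul_pow, Real.sq_sqrt hb]

def HaarMultiplierBoundedBy (W : ℝ → Mat d) (σ : ℤ → ℤ → Mat d) (C₀ : ℝ) : Prop :=
  ∀ f Tf : ℝ → Vec d, Measurable f → MemLp f 2 volume → wNormSq W f < ⊤ → Measurable Tf →
    (∀ᵐ x ∂volume, HasSum (fun p : ℤ × ℤ =>
        ((haar p.1 p.2 x : ℝ) : ℂ) • ((σ p.1 p.2).mulVec (fhat f p.1 p.2))) (Tf x)) →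
    (wNormSq W Tf) ^ ((1:ℝ)/2) ≤ ENNReal.ofReal C₀ * (wNormSq W f) ^ ((1:ℝ)/2)

lemma HaarMultiplierBoundedBy.qf_avgD_mulVec_le {W : ℝ → Mat d} {σ : ℤ → ℤ → Mat d} {C₀ : ℝ}
    (h : HaarMultiplierBoundedBy W σ C₀) (hW : IsMatrixWeight W) (hC₀ : 0 ≤ C₀) {k n : ℤ}
    (hA : (avgD W k n).PosSemidef) (v : Vec d) :
    qf (avgD W k n) (σ k n *ᵥ v) ≤ C₀ ^ 2 * qf (avgD W k n) v := by
  have hTf := h (fun x => (haar k n x : ℂ) • v) (fun x => (haar k n x : ℂ) • (σ k n *ᵥ v))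
    (measurable_haar_smul k n v) (memLp_haar_smul k n v)
    (by rw [wNormSq_haar_smul hW]; exact ENNReal.ofReal_lt_top)
    (measurable_haar_smul k n _)
    (.of_forall (hasSum_haar_smul_mulVec_fhat_haar_smul σ k n v))
  rw [wNormSq_haar_smul hW, wNormSq_haar_smul hW] at hTf
  exact le_sq_mul_of_ofReal_rpow_half_le (qf_nonneg hA _) (qf_nonneg hA v) hC₀ hTf

lemma msqrt_mul_self {A : Mat d} (hA : A.PosSemidef) : msqrt A * msqrt A = A := by
  rw [msqrt, dif_pos hA]
  set U : Mat d := (hA.1.eigenvectorUnitary : Mat d)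
  set D : Mat d := diagonal ((↑) ∘ (hA.1.eigenvalues · |>.sqrt))
  have hD : D * D = diagonal (RCLike.ofReal ∘ hA.1.eigenvalues) := by
    rw [diagonal_mul_diagonal]
    congr 1; funext i
    simp [← Complex.ofReal_mul, Real.mul_self_sqrt (hA.eigenvalues_nonneg i)]
  calc U * D * star U * (U * D * star U) = U * (D * (star U * U) * D) * star U := by
        simp only [mul_assoc]
    _ = A := by
        rw [Unitary.coe_star_mul_self, mul_one, hD]
        conv_rhs => rw [hA.1.spectral_theorem, Unitary.conjStarAlgAut_apply]

lemma isHermitian_msqrt {A : Mat d} (hA : A.PosSemidef) : (msqrt A).IsHermitian := by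
  rw [msqrt, dif_pos hA, IsHermitian, conjTranspose_mul, conjTranspose_mul, diagonal_conjTranspose]
  have hD : star (Complex.ofReal ∘ fun i => √(hA.1.eigenvalues i)) =
      Complex.ofReal ∘ fun i => √(hA.1.eigenvalues i) := by
    funext i; simp
  simp [Matrix.star_eq_conjTranspose, mul_assoc, hD]

lemma isUnit_det_msqrt {A : Mat d} (hA : A.PosDef) : IsUnit (msqrt A).det := by
  rw [isUnit_iff_ne_zero]
  intro h
  have := congrArg det (msqrt_mul_self hA.posSemidef)
  rw [det_mul, h, zero_mul] at this
  exact hA.det_pos.ne' this.symm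

lemma conjTranspose_mul_self_msqrt_conj {A : Mat d} (hA : A.PosSemidef) (σ : Mat d) :
    (msqrt A * σ * (msqrt A)⁻¹)ᴴ * (msqrt A * σ * (msqrt A)⁻¹) =
      (msqrt A)⁻¹ * σᴴ * A * σ * (msqrt A)⁻¹ := by
  have hS := isHermitian_msqrt hA
  rw [conjTranspose_mul, conjTranspose_mul, conjTranspose_nonsing_inv, hS.eq]
  simp only [mul_assoc]
  rw [← mul_assoc (msqrt A) (msqrt A), msqrt_mul_self hA]

lemma vnSq_msqrt_conj_mulVec_le {A σ : Mat d} {C : ℝ} (hA : A.PosDef)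
    (h : ∀ v, qf A (σ *ᵥ v) ≤ C ^ 2 * qf A v) (e : Vec d) :
    vnSq ((msqrt A * σ * (msqrt A)⁻¹) *ᵥ e) ≤ C ^ 2 * vnSq e := by
  have hqf : ∀ w, qf A w = vnSq (msqrt A *ᵥ w) := fun w => by
    rw [← qf_conjTranspose_mul_self, (isHermitian_msqrt hA.posSemidef).eq,
      msqrt_mul_self hA.posSemidef]
  calc vnSq ((msqrt A * σ * (msqrt A)⁻¹) *ᵥ e)
      = qf A (σ *ᵥ ((msqrt A)⁻¹ *ᵥ e)) := by rw [hqf, mulVec_mulVec, mulVec_mulVec, mul_assoc]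
    _ ≤ C ^ 2 * qf A ((msqrt A)⁻¹ *ᵥ e) := h _
    _ = C ^ 2 * vnSq e := by
      rw [hqf, mulVec_mulVec, mul_nonsing_inv _ (isUnit_det_msqrt hA), one_mulVec]

lemma mOpNorm_le_of_vnSq_le {B : Mat d} {C : ℝ} (hC : 0 ≤ C)
    (h : ∀ u, vnSq (B *ᵥ u) ≤ C ^ 2 * vnSq u) : mOpNorm B ≤ C := by
  refine ContinuousLinearMap.opNorm_le_bound _ hC fun x => ?_
  rw [← pow_le_pow_iff_left₀ (norm_nonneg _) (by positivity) two_ne_zero, mul_pow,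
    EuclideanSpace.norm_sq_eq, EuclideanSpace.norm_sq_eq]
  exact h (WithLp.ofLp x)

/-- **Necessity of `‖σ‖_∞ < ∞` for boundedness of a Haar multiplier** (Theorem 5.2). -/
theorem haar_multiplier_necessity (d : ℕ) (W : ℝ → Mat d) (K : ℝ)
    (hW : IsA2Weight W K) (σ : ℤ → ℤ → Mat d) (C₀ : ℝ) (hC₀ : 0 ≤ C₀)
    (hbdd : ∀ f Tf : ℝ → Vec d, Measurable f → MemLp f 2 volume → wNormSq W f < ⊤ →
      Measurable Tf →
      (∀ᵐ x ∂volume, HasSum (fun p : ℤ × ℤ =>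
          ((haar p.1 p.2 x : ℝ) : ℂ) • ((σ p.1 p.2).mulVec (fhat f p.1 p.2))) (Tf x)) →
      (wNormSq W Tf) ^ ((1:ℝ)/2) ≤ ENNReal.ofReal C₀ * (wNormSq W f) ^ ((1:ℝ)/2)) :
    (∀ (k n : ℤ) (e : Vec d),
      qf ((msqrt (avgD W k n))⁻¹ * (σ k n)ᴴ * avgD W k n * σ k n *
          (msqrt (avgD W k n))⁻¹) e ≤ C₀ ^ 2 * vnSq e) ∧
    (∀ k n : ℤ,
      mOpNorm (msqrt (avgD W k n) * σ k n * (msqrt (avgD W k n))⁻¹) ≤ C₀) := by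
  obtain ⟨hWweight, -, -, -, -, -, -, hpos, -⟩ := hW
  have hbound : ∀ k n e, vnSq ((msqrt (avgD W k n) * σ k n * (msqrt (avgD W k n))⁻¹) *ᵥ e) ≤
      C₀ ^ 2 * vnSq e := fun k n =>
    vnSq_msqrt_conj_mulVec_le (hpos k n) fun v =>
      HaarMultiplierBoundedBy.qf_avgD_mulVec_le hbdd hWweight hC₀ (hpos k n).posSemidef v
  refine ⟨fun k n e => ?_, fun k n => mOpNorm_le_of_vnSq_le hC₀ (hbound k n)⟩
  rw [← conjTranspose_mul_self_msqrt_conj (hpos k n).posSemidef, qf_conjTranspose_mul_self]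
  exact hbound k n e

end
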